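/- arXiv:2307.14662 — 3 statements merged into one kernel-verified Lean document; each statement's English description precedes it below -/
import Mathlib

section
/- Let X ~ Exp(1) (central chi-square with 2 DoF after rescaling) and Y noncentral chi-square with 2 DoF and noncentrality τ, independent. Then P(X > Y) = (1/2)·e^{-τ/4}. -/
open MeasureTheory ProbabilityTheory Real

/-- Modified Bessel function of the first kind of order zero:
`I₀(z) = ∑_{k=0}^∞ (z/2)^{2k}/(k!)²`. -/
noncomputable def besselI0 (z : ℝ) : ℝ :=
  ∑' k : ℕ, (z / 2) ^ (2 * k) / ((k.factorial : ℝ) ^ 2)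

/-! Conditioning on `Y`, `P(X > Y) = E[e^{-Y/2}]`. Expanding `I₀(√(τy))` as a power series in
`y`, each term of the resulting Laplace transform is a Gamma integral `∫ y^k e^{-y} = k!`, which
cancels one factorial in `(τ/4)^k/(k!)²`; the series sums to `e^{τ/4}`, and
`(1/2) e^{-τ/2} e^{τ/4} = (1/2) e^{-τ/4}`. -/

open Set

lemma summable_pow_div_factorial_sq (x : ℝ) :
    Summable fun k : ℕ => x ^ k / (k.factorial : ℝ) ^ 2 := by
  refine (Real.summable_pow_div_factorial |x|).of_norm_bounded fun k => ?_
  have hk : (1 : ℝ) ≤ k.factorial := by exact_mod_cast k.factorial_pos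
  rw [norm_div, norm_pow, Real.norm_eq_abs, norm_pow, Real.norm_natCast]
  exact div_le_div_of_nonneg_left (by positivity) (by positivity) (by nlinarith)

lemma besselI0_nonneg (z : ℝ) : 0 ≤ besselI0 z :=
  tsum_nonneg fun k => by rw [pow_mul]; positivity

lemma besselI0_sqrt {s : ℝ} (hs : 0 ≤ s) :
    besselI0 √s = ∑' k : ℕ, (s / 4) ^ k / (k.factorial : ℝ) ^ 2 := by
  refine tsum_congr fun k => ?_
  rw [pow_mul, div_pow, Real.sq_sqrt hs]
  norm_num

@[fun_prop]
lemma measurable_besselI0 : Measurable besselI0 :=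
  Measurable.tsum fun _ => by fun_prop

lemma lintegral_exp_neg_mul_pow_Ioi (k : ℕ) :
    ∫⁻ y in Ioi (0 : ℝ), ENNReal.ofReal (exp (-y) * y ^ k) = k.factorial := by
  have hGamma := Real.GammaIntegral_convergent (s := k + 1) (by positivity)
  simp only [add_sub_cancel_right, Real.rpow_natCast] at hGamma
  rw [← ofReal_integral_eq_lintegral_ofReal hGamma
    ((ae_restrict_iff' measurableSet_Ioi).mpr (ae_of_all _ fun y (hy : 0 < y) => by positivity))]
  have hfactorial := Real.Gamma_eq_integral (s := k + 1) (by positivity)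
  simp only [add_sub_cancel_right, Real.rpow_natCast, Real.Gamma_nat_eq_factorial] at hfactorial
  rw [← hfactorial, ENNReal.ofReal_natCast]

lemma lintegral_exp_neg_mul_besselI0_sqrt {t : ℝ} (ht : 0 ≤ t) :
    ∫⁻ y in Ioi (0 : ℝ), ENNReal.ofReal (exp (-y) * besselI0 √(t * y))
      = ENNReal.ofReal (exp (t / 4)) := by
  have hcoeff : ∀ k : ℕ, 0 ≤ (t / 4) ^ k / (k.factorial : ℝ) ^ 2 := fun k => by positivity
  have hseries : ∀ y ∈ Ioi (0 : ℝ), ENNReal.ofReal (exp (-y) * besselI0 √(t * y))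
      = ∑' k : ℕ, ENNReal.ofReal ((t / 4) ^ k / (k.factorial : ℝ) ^ 2)
          * ENNReal.ofReal (exp (-y) * y ^ k) := by
    intro y (hy : 0 < y)
    have hterm : ∀ k : ℕ, exp (-y) * ((t * y / 4) ^ k / (k.factorial : ℝ) ^ 2)
        = (t / 4) ^ k / (k.factorial : ℝ) ^ 2 * (exp (-y) * y ^ k) := fun k => by
      rw [mul_div_right_comm, mul_pow]; ring
    rw [besselI0_sqrt (by positivity), ← tsum_mul_left, tsum_congr hterm,
      ENNReal.ofReal_tsum_of_nonneg (fun k => by positivity)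
        (((summable_pow_div_factorial_sq (t * y / 4)).mul_left (exp (-y))).congr hterm)]
    exact tsum_congr fun k => ENNReal.ofReal_mul (hcoeff k)
  have hterm : ∀ k : ℕ, ∫⁻ y in Ioi (0 : ℝ), ENNReal.ofReal ((t / 4) ^ k / (k.factorial : ℝ) ^ 2)
      * ENNReal.ofReal (exp (-y) * y ^ k) = ENNReal.ofReal ((t / 4) ^ k / k.factorial) := by
    intro k
    rw [lintegral_const_mul' _ _ ENNReal.ofReal_ne_top, lintegral_exp_neg_mul_pow_Ioi,
      ← ENNReal.ofReal_natCast, ← ENNReal.ofReal_mul (hcoeff k)]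
    congr 1
    field_simp
  rw [setLIntegral_congr_fun measurableSet_Ioi hseries,
    lintegral_tsum fun k => by fun_prop, tsum_congr hterm,
    ← ENNReal.ofReal_tsum_of_nonneg (fun k => by positivity) (Real.summable_pow_div_factorial _),
    Real.exp_eq_exp_ℝ, NormedSpace.exp_eq_tsum_div]

noncomputable def noncentralChiSq2PDFReal (τ y : ℝ) : ℝ :=
  if 0 ≤ y then (1 / 2) * exp (-(y + τ) / 2) * besselI0 √(τ * y) else 0

lemma measurable_noncentralChiSq2PDFReal (τ : ℝ) : Measurable (noncentralChiSq2PDFReal τ) :=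
  Measurable.ite measurableSet_Ici (by fun_prop) measurable_const

lemma lintegral_noncentralChiSq2PDF_mul_exp {τ : ℝ} (hτ : 0 ≤ τ) :
    ∫⁻ y, ENNReal.ofReal (noncentralChiSq2PDFReal τ y) * ENNReal.ofReal (exp (-(1 / 2 * y)))
      = ENNReal.ofReal ((1 / 2) * exp (-τ / 4)) := by
  have hsupport : Function.support (fun y => ENNReal.ofReal (noncentralChiSq2PDFReal τ y)
      * ENNReal.ofReal (exp (-(1 / 2 * y)))) ⊆ Ici 0 := fun y hy => by
    by_contra hneg
    simp [noncentralChiSq2PDFReal, show ¬ 0 ≤ y from hneg] at hy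
  have hintegrand : ∀ y ∈ Ioi (0 : ℝ), ENNReal.ofReal (noncentralChiSq2PDFReal τ y)
        * ENNReal.ofReal (exp (-(1 / 2 * y)))
      = ENNReal.ofReal ((1 / 2) * exp (-τ / 2))
        * ENNReal.ofReal (exp (-y) * besselI0 √(τ * y)) := by
    intro y (hy : 0 < y)
    have hI := besselI0_nonneg √(τ * y)
    rw [noncentralChiSq2PDFReal, if_pos hy.le, ← ENNReal.ofReal_mul (by positivity),
      ← ENNReal.ofReal_mul (by positivity)]
    congr 1
    have hexp : exp (-(y + τ) / 2) * exp (-(1 / 2 * y)) = exp (-τ / 2) * exp (-y) := by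
      rw [← exp_add, ← exp_add]; ring_nf
    linear_combination (1 / 2 * besselI0 √(τ * y)) * hexp
  rw [← setLIntegral_eq_of_support_subset hsupport, ← setLIntegral_congr Ioi_ae_eq_Ici,
    setLIntegral_congr_fun measurableSet_Ioi hintegrand,
    lintegral_const_mul' _ _ ENNReal.ofReal_ne_top, lintegral_exp_neg_mul_besselI0_sqrt hτ,
    ← ENNReal.ofReal_mul (by positivity), mul_assoc, ← exp_add]
  ring_nf

lemma expMeasure_Ioi {r : ℝ} (hr : 0 < r) {y : ℝ} (hy : 0 ≤ y) :
    expMeasure r (Ioi y) = ENNReal.ofReal (exp (-(r * y))) := by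
  have := isProbabilityMeasure_expMeasure hr
  have hexp_le : exp (-(r * y)) ≤ 1 := exp_le_one_iff.mpr (by nlinarith)
  rw [← compl_Iic, prob_compl_eq_one_sub measurableSet_Iic, ← ofReal_cdf,
    cdf_expMeasure_eq hr, if_pos hy, ENNReal.ofReal_sub _ (exp_pos _).le, ENNReal.ofReal_one,
    ENNReal.sub_sub_cancel ENNReal.one_ne_top (ENNReal.ofReal_le_one.mpr hexp_le)]

lemma measure_lt_eq_lintegral_map_Ioi {Ω α : Type*} [MeasurableSpace Ω] [MeasurableSpace α]
    [TopologicalSpace α] [LinearOrder α] [OrderClosedTopology α] [OpensMeasurableSpace α]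
    [SecondCountableTopology α] {P : Measure Ω} [IsFiniteMeasure P] {X Y : Ω → α}
    (hX : Measurable X) (hY : Measurable Y) (hXY : IndepFun X Y P) :
    P {ω | Y ω < X ω} = ∫⁻ y, P.map X (Ioi y) ∂(P.map Y) := by
  have hlt : MeasurableSet {p : α × α | p.2 < p.1} :=
    measurableSet_lt measurable_snd measurable_fst
  change P ((fun ω => (X ω, Y ω)) ⁻¹' {p | p.2 < p.1}) = _
  rw [← Measure.map_apply (hX.prodMk hY) hlt,
    (indepFun_iff_map_prod_eq_prod_map_map hX.aemeasurable hY.aemeasurable).mp hXY,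
    Measure.prod_apply_symm hlt]
  rfl

/-- if `X` has density `(1/2)e^{-x/2}` on `[0,∞)` (central chi-square, 2 DoF)
and `Y` has density `(1/2)e^{-(y+τ)/2} I₀(√(τy))` on `[0,∞)` (noncentral chi-square, 2 DoF,
noncentrality `τ`), `X, Y` independent, then `P(X > Y) = (1/2)e^{-τ/4}`. -/
theorem stmt8 {Ω : Type*} [MeasureSpace Ω] [IsProbabilityMeasure (ℙ : Measure Ω)]
    (τ : ℝ) (hτ : 0 ≤ τ) (X Y : Ω → ℝ) (hX : Measurable X) (hY : Measurable Y)
    (hindep : IndepFun X Y ℙ)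
    (hXlaw : Measure.map X ℙ = (volume : Measure ℝ).withDensity
      (fun x => ENNReal.ofReal (if 0 ≤ x then (1 / 2) * Real.exp (-x / 2) else 0)))
    (hYlaw : Measure.map Y ℙ = (volume : Measure ℝ).withDensity
      (fun y => ENNReal.ofReal
        (if 0 ≤ y then (1 / 2) * Real.exp (-(y + τ) / 2) * besselI0 (Real.sqrt (τ * y))
         else 0))) :
    ℙ {ω | X ω > Y ω} = ENNReal.ofReal ((1 / 2) * Real.exp (-τ / 4)) := by
  have hXexp : Measure.map X ℙ = expMeasure (1 / 2) := by
    have hpdf : (fun x : ℝ => ENNReal.ofReal (if 0 ≤ x then (1 / 2) * exp (-x / 2) else 0))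
        = exponentialPDF (1 / 2) :=
      funext fun x => by rw [exponentialPDF_eq, neg_div, div_eq_inv_mul x, one_div]
    rw [hXlaw, hpdf]
    rfl
  have hYpdf : Measure.map Y ℙ
      = volume.withDensity fun y => ENNReal.ofReal (noncentralChiSq2PDFReal τ y) := hYlaw
  have htail : Measurable fun y => expMeasure (1 / 2) (Ioi y) :=
    Antitone.measurable fun a b hab => measure_mono (Ioi_subset_Ioi hab)
  calc ℙ {ω | X ω > Y ω}
      = ∫⁻ y, expMeasure (1 / 2) (Ioi y) ∂(Measure.map Y ℙ) := by
        rw [← hXexp]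
        exact measure_lt_eq_lintegral_map_Ioi hX hY hindep
    _ = ∫⁻ y, ENNReal.ofReal (noncentralChiSq2PDFReal τ y)
          * ENNReal.ofReal (exp (-(1 / 2 * y))) := by
        rw [hYpdf, lintegral_withDensity_eq_lintegral_mul _
          (measurable_noncentralChiSq2PDFReal τ).ennreal_ofReal htail]
        refine lintegral_congr fun y => ?_
        rcases le_or_gt 0 y with hy | hy
        · rw [Pi.mul_apply, expMeasure_Ioi (by norm_num) hy]
        · simp [noncentralChiSq2PDFReal, hy.not_ge]
    _ = ENNReal.ofReal ((1 / 2) * exp (-τ / 4)) := lintegral_noncentralChiSq2PDF_mul_exp hτ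
end

section
/- The two closed-form expressions for the UPEP (when l̂ = l) obtained by the PDF method and the MGF method are equal: (L!/(2(l-1)!)) ∑_{k=0}^{L-l} ((-1)^k/(k!(L-l-k)!(k+l)))(1 - √(c/(c+k+l))) = (1/2)∑_{ς=1}^{L̇}(1 - √(c_ς/(1+c_ς))) ∏_{ν≠ς}(c_ς/(c_ς - c_ν)), where L̇ = L-l+1, c_ς = c/(ς+l-1), c_ν = c/(ν+l-1), for any c > 0 with all c_ς distinct. -/
/-!
Write `l = j + 1` and `L - l = m`. The two sums agree term by term under `ς = k + 1`. Since
`c ≠ 0`, the weight `∏_{ν ≠ ς} c_ς / (c_ς - c_ν)` equals `∏_{ν ≠ ς} (ν + j) / (ν - ς)`; its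
numerator is `L! / (j! (ς + j))` and its denominator is `(-1)^k k! (m - k)!`, which is exactly the
coefficient of the PDF form. Finally `c_ς / (1 + c_ς) = c / (c + ς + j)`.
-/

open Finset Nat

section Field
variable {K : Type*} [Field K]

theorem div_div_sub_div_eq_div_sub {a b c : K} (hc : c ≠ 0) (ha : a ≠ 0) (hb : b ≠ 0) :
    c / a / (c / a - c / b) = b / (b - a) := by
  rcases eq_or_ne b a with rfl | hba
  · simp
  · field_simp [sub_ne_zero.mpr hba]

theorem div_div_one_add_div {a c : K} (ha : a ≠ 0) : c / a / (1 + c / a) = c / (a + c) := by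
  rw [one_add_div ha, div_div_div_cancel_right₀ ha]

end Field

section CommRing
variable {R : Type*} [CommRing R]

theorem prod_range_natCast_sub_self (k : ℕ) : ∏ i ∈ range k, ((i : R) - k) = (-1) ^ k * k ! := by
  induction k with
  | zero => simp
  | succ k ih =>
    rw [prod_range_succ']
    simp only [Nat.cast_add, Nat.cast_one, add_sub_add_right_eq_sub, ih]
    push_cast [factorial_succ]
    ring

theorem prod_Ico_one_natCast_sub (k : ℕ) :
    ∏ ν ∈ Ico 1 (k + 1), ((ν : R) - (k + 1)) = (-1) ^ k * k ! := by
  rw [prod_Ico_eq_prod_range, add_tsub_cancel_right, ← prod_range_natCast_sub_self]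
  refine prod_congr rfl fun i _ => ?_
  push_cast
  ring

theorem prod_Ioc_natCast_sub (a r : ℕ) : ∏ ν ∈ Ioc a (a + r), ((ν : R) - a) = r ! := by
  induction r with
  | zero => simp
  | succ r ih =>
    rw [← add_assoc, prod_Ioc_succ_top (le_add_right le_rfl), ih, factorial_succ]
    push_cast
    ring

theorem prod_Icc_erase_natCast_sub (k r : ℕ) :
    ∏ ν ∈ (Icc 1 (k + 1 + r)).erase (k + 1), ((ν : R) - (k + 1)) = (-1) ^ k * k ! * r ! := by
  have hsplit : (Icc 1 (k + 1 + r)).erase (k + 1) = Ico 1 (k + 1) ∪ Ioc (k + 1) (k + 1 + r) := by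
    ext ν; simp only [mem_erase, mem_Icc, mem_union, mem_Ico, mem_Ioc]; omega
  have hdisj : Disjoint (Ico 1 (k + 1)) (Ioc (k + 1) (k + 1 + r)) :=
    disjoint_left.2 fun ν h₁ h₂ => by simp only [mem_Ico, mem_Ioc] at h₁ h₂; omega
  rw [hsplit, prod_union hdisj, prod_Ico_one_natCast_sub, ← prod_Ioc_natCast_sub (k + 1) r]
  push_cast
  rfl

theorem factorial_mul_prod_Icc_natCast_add (j n : ℕ) :
    (j ! : R) * ∏ ν ∈ Icc 1 n, ((ν : R) + j) = (n + j)! := by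
  induction n with
  | zero => simp
  | succ n ih =>
    rw [prod_Icc_succ_top (by omega), ← mul_assoc, ih, add_right_comm, factorial_succ]
    push_cast
    ring

theorem factorial_mul_prod_Icc_erase_natCast_add (j : ℕ) {n ς : ℕ} (hς : ς ∈ Icc 1 n) :
    (j ! : R) * ((ς : R) + j) * ∏ ν ∈ (Icc 1 n).erase ς, ((ν : R) + j) = (n + j)! := by
  rw [mul_assoc, mul_prod_erase _ (fun ν : ℕ => (ν : R) + j) hς,
    factorial_mul_prod_Icc_natCast_add]

end CommRing

theorem prod_Icc_erase_div_div_sub_div {K : Type*} [Field K] [CharZero K] {c : K} (hc : c ≠ 0)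
    (j k r : ℕ) :
    ∏ ν ∈ (Icc 1 (k + 1 + r)).erase (k + 1),
        c / ((k : K) + 1 + j) / (c / ((k : K) + 1 + j) - c / ((ν : K) + j)) =
      (-1) ^ k * (k + 1 + r + j)! / (j ! * k ! * r ! * ((k : K) + 1 + j)) := by
  have hne : ∀ ν ∈ Icc 1 (k + 1 + r), (ν : K) + j ≠ 0 := fun ν hν => by
    have := (mem_Icc.1 hν).1
    exact_mod_cast (show ν + j ≠ 0 by omega)
  have hς : k + 1 ∈ Icc 1 (k + 1 + r) := mem_Icc.2 ⟨by omega, by omega⟩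
  rw [prod_congr rfl fun ν hν => div_div_sub_div_eq_div_sub hc (by exact_mod_cast hne _ hς)
    (hne ν (mem_of_mem_erase hν))]
  have hnum : ∏ ν ∈ (Icc 1 (k + 1 + r)).erase (k + 1), ((ν : K) + j) =
      (k + 1 + r + j)! / (j ! * ((k : K) + 1 + j)) := by
    have hj : (j ! : K) ≠ 0 := by exact_mod_cast factorial_ne_zero j
    rw [eq_div_iff (mul_ne_zero hj (by exact_mod_cast hne _ hς)), mul_comm,
      ← factorial_mul_prod_Icc_erase_natCast_add j hς]
    push_cast
    rfl
  have hsign : ((-1 : K) ^ k)⁻¹ = (-1) ^ k := by rw [← inv_pow, inv_neg_one]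
  simp only [add_sub_add_right_eq_sub]
  rw [prod_div_distrib, prod_Icc_erase_natCast_sub, hnum]
  simp only [div_eq_mul_inv, mul_inv, hsign]
  ring

theorem stmt12_general (L l : ℕ) (hl : 1 ≤ l) (hL : l ≤ L) (c : ℝ) (hc : 0 < c) :
    ((L.factorial : ℝ) / (2 * (l - 1).factorial)) *
        ∑ k ∈ Finset.range (L - l + 1),
          (-1 : ℝ) ^ k / ((k.factorial : ℝ) * (L - l - k).factorial * ((k : ℝ) + l)) *
            (1 - Real.sqrt (c / (c + (k : ℝ) + l)))
      = (1 / 2) * ∑ ς ∈ Finset.Icc 1 (L - l + 1),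
          (1 - Real.sqrt ((c / ((ς : ℝ) + l - 1)) / (1 + c / ((ς : ℝ) + l - 1)))) *
            ∏ ν ∈ (Finset.Icc 1 (L - l + 1)).erase ς,
              (c / ((ς : ℝ) + l - 1)) /
                (c / ((ς : ℝ) + l - 1) - c / ((ν : ℝ) + l - 1)) := by
  obtain ⟨j, rfl⟩ : ∃ j, l = j + 1 := ⟨l - 1, by omega⟩
  obtain ⟨m, rfl⟩ : ∃ m, L = j + 1 + m := ⟨L - (j + 1), by omega⟩
  have hshift : ∀ x : ℝ, x + ((j + 1 : ℕ) : ℝ) - 1 = x + j := fun x => by push_cast; ring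
  simp only [add_tsub_cancel_left, add_tsub_cancel_right, hshift]
  rw [← Ico_add_one_right_eq_Icc, sum_Ico_eq_sum_range, mul_sum, mul_sum]
  refine sum_congr rfl fun k hkm => ?_
  obtain ⟨r, rfl⟩ := exists_add_of_le (mem_range_succ_iff.mp hkm)
  have hk : (k : ℝ) + 1 + j ≠ 0 := by positivity
  rw [Ico_add_one_right_eq_Icc, add_right_comm k r 1, add_comm 1 k]
  simp only [Nat.cast_add_one]
  rw [prod_Icc_erase_div_div_sub_div hc.ne', div_div_one_add_div hk, add_tsub_cancel_left,
    show j + 1 + (k + r) = k + 1 + r + j by ring, show c + k + (j + 1) = k + 1 + j + c by ring]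
  field_simp
  ring

/-- the PDF-method and MGF-method closed forms of the UPEP (case `l̂ = l`)
coincide. Here `L̇ = L - l + 1`, `c_ς = c/(ς+l-1)`, `c_ν = c/(ν+l-1)`. -/
theorem stmt12 (L l : ℕ) (hl : 1 ≤ l) (hL : l ≤ L) (c : ℝ) (hc : 0 < c)
    (hdist : ∀ ς ∈ Finset.Icc 1 (L - l + 1), ∀ ν ∈ Finset.Icc 1 (L - l + 1), ς ≠ ν →
      c / ((ς : ℝ) + l - 1) ≠ c / ((ν : ℝ) + l - 1)) :
    ((L.factorial : ℝ) / (2 * (l - 1).factorial)) *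
        ∑ k ∈ Finset.range (L - l + 1),
          (-1 : ℝ) ^ k / ((k.factorial : ℝ) * (L - l - k).factorial * ((k : ℝ) + l)) *
            (1 - Real.sqrt (c / (c + (k : ℝ) + l)))
      = (1 / 2) * ∑ ς ∈ Finset.Icc 1 (L - l + 1),
          (1 - Real.sqrt ((c / ((ς : ℝ) + l - 1)) / (1 + c / ((ς : ℝ) + l - 1)))) *
            ∏ ν ∈ (Finset.Icc 1 (L - l + 1)).erase ς,
              (c / ((ς : ℝ) + l - 1)) /
                (c / ((ς : ℝ) + l - 1) - c / ((ν : ℝ) + l - 1)) :=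
  stmt12_general L l hl hL c hc
end

section
/- Asymptotic UPEP (l̂ = l case): as ρ → ∞, the expression (1/π)∫₀^{π/2} ∏_{ξ=l}^{L} sin²θ/(sin²θ + ρc/(4ξ)) dθ is asymptotically equal to ((2L̇-1)!!/(2(2L̇)!!))·(Γ(L+1)/Γ(l))·(4/(ρc))^{L̇}, where L̇ = L - l + 1 and c > 0 is fixed; i.e., the ratio of the two quantities tends to 1. -/
/-!
For `s = sin² θ ∈ [0, 1]` and `a > 0` one has `s / (1 + a) ≤ s / (s + a) ≤ s / a`, so the
integrand is squeezed between `sin^{2n} θ · ∏ (1 + aξ)⁻¹` and `sin^{2n} θ · ∏ aξ⁻¹`, where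
`aξ = ρc/(4ξ)` and `n = L - l + 1`. By Wallis, `(1/π)∫₀^{π/2} sin^{2n} = (2n-1)!!/(2 (2n)!!)`,
and `∏ aξ⁻¹ = (Γ(L+1)/Γ(l)) (4/(ρc))ⁿ`, so the ratio lies between `∏ aξ/(1 + aξ)` and `1`;
the lower bound tends to `1` as `ρ → ∞`.
-/

open Real Filter Topology Finset Nat

theorem factorial_sub_one_mul_prod_Icc {l L : ℕ} (hl : 1 ≤ l) (hL : l ≤ L + 1) :
    (l - 1)! * ∏ ξ ∈ Icc l L, ξ = L ! := by
  rw [← Ico_add_one_right_eq_Icc, prod_Ico_eq_prod_range, ← ascFactorial_eq_prod_range,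
    factorial_mul_ascFactorial' _ _ hl]
  congr 1
  omega

theorem Real.Gamma_nat_add_one_div_Gamma_nat {l L : ℕ} (hl : 1 ≤ l) (hL : l ≤ L + 1) :
    Gamma (L + 1) / Gamma l = ∏ ξ ∈ Icc l L, (ξ : ℝ) := by
  obtain ⟨k, rfl⟩ : ∃ k, l = k + 1 := ⟨l - 1, by omega⟩
  rw [Gamma_nat_eq_factorial, Nat.cast_succ, Gamma_nat_eq_factorial, div_eq_iff (by positivity),
    ← factorial_sub_one_mul_prod_Icc hl hL]
  push_cast
  simp [mul_comm]

theorem integral_sin_pow_two_mul_zero_pi_div_two (n : ℕ) :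
    ∫ θ in (0:ℝ)..π / 2, sin θ ^ (2 * n) = π / 2 * ((2 * n - 1)‼ / (2 * n)‼ : ℝ) := by
  induction n with
  | zero => simp
  | succ n ih =>
    rw [show 2 * (n + 1) = 2 * n + 2 by ring, integral_sin_pow, ih,
      show 2 * n + 2 - 1 = 2 * n + 1 by omega, doubleFactorial_add_one, doubleFactorial_add_two]
    simp only [cos_pi_div_two, sin_zero, mul_zero, sub_zero]
    push_cast
    field_simp
    ring

theorem integral_sin_pow_two_mul_zero_pi_div_two_pos (n : ℕ) :
    0 < ∫ θ in (0:ℝ)..π / 2, sin θ ^ (2 * n) := by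
  rw [integral_sin_pow_two_mul_zero_pi_div_two]
  have := pi_pos
  have := doubleFactorial_pos (2 * n - 1)
  have := doubleFactorial_pos (2 * n)
  positivity

theorem tendsto_div_one_add_atTop_nhds_one : Tendsto (fun x : ℝ => x / (1 + x)) atTop (𝓝 1) := by
  have h : Tendsto (fun x : ℝ => 1 - (1 + x)⁻¹) atTop (𝓝 (1 - 0)) :=
    tendsto_const_nhds.sub
      (tendsto_inv_atTop_zero.comp (tendsto_atTop_add_const_left _ 1 tendsto_id))
  rw [sub_zero] at h
  refine h.congr' ((eventually_gt_atTop 0).mono fun x hx => ?_)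
  field_simp
  ring

section SinSqProduct

variable {ι : Type*} (t : Finset ι) {a : ι → ℝ}

theorem pow_card_mul_prod_inv_one_add_le_prod_div_add {s : ℝ} (hs₀ : 0 ≤ s) (hs₁ : s ≤ 1)
    (ha : ∀ i ∈ t, 0 < a i) :
    s ^ #t * ∏ i ∈ t, (1 + a i)⁻¹ ≤ ∏ i ∈ t, s / (s + a i) := by
  rw [← prod_const, ← prod_mul_distrib]
  refine prod_le_prod (fun i hi => by have := ha i hi; positivity) fun i hi => ?_
  have := ha i hi
  rw [← div_eq_mul_inv]
  gcongr

theorem prod_div_add_le_pow_card_mul_prod_inv {s : ℝ} (hs₀ : 0 ≤ s) (ha : ∀ i ∈ t, 0 < a i) :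
    ∏ i ∈ t, s / (s + a i) ≤ s ^ #t * ∏ i ∈ t, (a i)⁻¹ := by
  rw [← prod_const, ← prod_mul_distrib]
  refine prod_le_prod (fun i hi => by have := ha i hi; positivity) fun i hi => ?_
  have := ha i hi
  rw [← div_eq_mul_inv]
  gcongr
  exact le_add_of_nonneg_left hs₀

theorem intervalIntegrable_prod_sin_sq_div_add (ha : ∀ i ∈ t, 0 < a i) (x y : ℝ) :
    IntervalIntegrable (fun θ => ∏ i ∈ t, sin θ ^ 2 / (sin θ ^ 2 + a i))
      MeasureTheory.volume x y :=
  (continuous_finsetProd t fun i hi => by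
    have := ha i hi
    exact (continuous_sin.pow 2).div (by fun_prop) fun θ => by positivity).intervalIntegrable x y

theorem integral_sin_pow_mul_prod_inv_one_add_le (ha : ∀ i ∈ t, 0 < a i) :
    (∫ θ in (0:ℝ)..π / 2, sin θ ^ (2 * #t)) * ∏ i ∈ t, (1 + a i)⁻¹ ≤
      ∫ θ in (0:ℝ)..π / 2, ∏ i ∈ t, sin θ ^ 2 / (sin θ ^ 2 + a i) := by
  rw [← intervalIntegral.integral_mul_const]
  refine intervalIntegral.integral_mono_on (by positivity)
    ((by fun_prop : Continuous _).intervalIntegrable _ _)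
    (intervalIntegrable_prod_sin_sq_div_add t ha _ _) fun θ _ => ?_
  rw [pow_mul]
  exact pow_card_mul_prod_inv_one_add_le_prod_div_add t (sq_nonneg _) (sin_sq_le_one θ) ha

theorem integral_prod_sin_sq_div_add_le (ha : ∀ i ∈ t, 0 < a i) :
    ∫ θ in (0:ℝ)..π / 2, ∏ i ∈ t, sin θ ^ 2 / (sin θ ^ 2 + a i) ≤
      (∫ θ in (0:ℝ)..π / 2, sin θ ^ (2 * #t)) * ∏ i ∈ t, (a i)⁻¹ := by
  rw [← intervalIntegral.integral_mul_const]
  refine intervalIntegral.integral_mono_on (by positivity)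
    (intervalIntegrable_prod_sin_sq_div_add t ha _ _)
    ((by fun_prop : Continuous _).intervalIntegrable _ _) fun θ _ => ?_
  rw [pow_mul]
  exact prod_div_add_le_pow_card_mul_prod_inv t (sq_nonneg _) ha

theorem prod_div_one_add_le_integral_prod_sin_sq_div_add_div (ha : ∀ i ∈ t, 0 < a i) :
    ∏ i ∈ t, a i / (1 + a i) ≤
      (∫ θ in (0:ℝ)..π / 2, ∏ i ∈ t, sin θ ^ 2 / (sin θ ^ 2 + a i)) /
        ((∫ θ in (0:ℝ)..π / 2, sin θ ^ (2 * #t)) * ∏ i ∈ t, (a i)⁻¹) := by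
  have hW := integral_sin_pow_two_mul_zero_pi_div_two_pos #t
  have hP : 0 < ∏ i ∈ t, (a i)⁻¹ := prod_pos fun i hi => inv_pos.2 (ha i hi)
  rw [le_div_iff₀ (by positivity)]
  calc (∏ i ∈ t, a i / (1 + a i)) *
        ((∫ θ in (0:ℝ)..π / 2, sin θ ^ (2 * #t)) * ∏ i ∈ t, (a i)⁻¹)
      = (∫ θ in (0:ℝ)..π / 2, sin θ ^ (2 * #t)) * ∏ i ∈ t, (1 + a i)⁻¹ := by
        rw [mul_left_comm, ← prod_mul_distrib]
        congr 1
        refine prod_congr rfl fun i hi => ?_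
        have := (ha i hi).ne'
        field_simp
    _ ≤ _ := integral_sin_pow_mul_prod_inv_one_add_le t ha

theorem integral_prod_sin_sq_div_add_div_le_one (ha : ∀ i ∈ t, 0 < a i) :
    (∫ θ in (0:ℝ)..π / 2, ∏ i ∈ t, sin θ ^ 2 / (sin θ ^ 2 + a i)) /
        ((∫ θ in (0:ℝ)..π / 2, sin θ ^ (2 * #t)) * ∏ i ∈ t, (a i)⁻¹) ≤ 1 := by
  have hW := integral_sin_pow_two_mul_zero_pi_div_two_pos #t
  have hP : 0 < ∏ i ∈ t, (a i)⁻¹ := prod_pos fun i hi => inv_pos.2 (ha i hi)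
  exact div_le_one_of_le₀ (integral_prod_sin_sq_div_add_le t ha) (by positivity)

theorem tendsto_prod_div_one_add_atTop {α : Type*} {l : Filter α} {f : ι → α → ℝ}
    (hf : ∀ i ∈ t, Tendsto (f i) l atTop) :
    Tendsto (fun x => ∏ i ∈ t, f i x / (1 + f i x)) l (𝓝 1) := by
  simpa using tendsto_finsetProd t fun i hi => tendsto_div_one_add_atTop_nhds_one.comp (hf i hi)

theorem tendsto_integral_prod_sin_sq_div_add_mul_div {k : ι → ℝ} (hk : ∀ i ∈ t, 0 < k i) :
    Tendsto (fun ρ => (∫ θ in (0:ℝ)..π / 2, ∏ i ∈ t, sin θ ^ 2 / (sin θ ^ 2 + ρ * k i)) /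
        ((∫ θ in (0:ℝ)..π / 2, sin θ ^ (2 * #t)) * ∏ i ∈ t, (ρ * k i)⁻¹)) atTop (𝓝 1) := by
  have ha : ∀ᶠ ρ in atTop, ∀ i ∈ t, 0 < ρ * k i :=
    (eventually_gt_atTop 0).mono fun ρ hρ i hi => mul_pos hρ (hk i hi)
  refine tendsto_of_tendsto_of_tendsto_of_le_of_le'
    (tendsto_prod_div_one_add_atTop t fun i hi => tendsto_id.atTop_mul_const (hk i hi))
    tendsto_const_nhds (ha.mono fun ρ hρ => ?_) (ha.mono fun ρ hρ => ?_)
  · exact prod_div_one_add_le_integral_prod_sin_sq_div_add_div t hρ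
  · exact integral_prod_sin_sq_div_add_div_le_one t hρ

end SinSqProduct

/-- asymptotic UPEP, `l̂ = l` case: as `ρ → ∞`,
`(1/π)∫₀^{π/2} ∏_{ξ=l}^{L} sin²θ/(sin²θ + ρc/(4ξ)) dθ` is asymptotically equal to
`((2L̇-1)!!/(2(2L̇)!!))·(Γ(L+1)/Γ(l))·(4/(ρc))^{L̇}` with `L̇ = L - l + 1`,
i.e. the ratio tends to `1`. -/
theorem stmt14 (L l : ℕ) (hl : 1 ≤ l) (hL : l ≤ L) (c : ℝ) (hc : 0 < c) :
    Tendsto (fun ρ : ℝ =>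
        ((1 / π) * ∫ θ in (0:ℝ)..(π / 2),
            ∏ ξ ∈ Finset.Icc l L, Real.sin θ ^ 2 / (Real.sin θ ^ 2 + ρ * c / (4 * ξ))) /
          (((Nat.doubleFactorial (2 * (L - l + 1) - 1) : ℝ) /
              (2 * (Nat.doubleFactorial (2 * (L - l + 1)) : ℝ))) *
            (Real.Gamma (L + 1) / Real.Gamma l) * (4 / (ρ * c)) ^ (L - l + 1)))
      atTop (nhds 1) := by
  have hcard : #(Icc l L) = L - l + 1 := by rw [Nat.card_Icc]; omega
  have hk : ∀ ξ ∈ Icc l L, 0 < c / (4 * ξ) := fun ξ hξ => by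
    have : (0 : ℝ) < ξ := by exact_mod_cast hl.trans (mem_Icc.1 hξ).1
    positivity
  refine (tendsto_integral_prod_sin_sq_div_add_mul_div _ hk).congr fun ρ => ?_
  have hprod : ∏ ξ ∈ Icc l L, (ρ * (c / (4 * ξ)))⁻¹ =
      (∏ ξ ∈ Icc l L, (ξ : ℝ)) * (4 / (ρ * c)) ^ #(Icc l L) := by
    rw [← prod_const, ← prod_mul_distrib]
    refine prod_congr rfl fun ξ _ => ?_
    simp only [div_eq_mul_inv, mul_inv, inv_inv]
    ring
  simp_rw [mul_div_assoc ρ c, hprod, Real.Gamma_nat_add_one_div_Gamma_nat hl (by omega : l ≤ L + 1),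
    integral_sin_pow_two_mul_zero_pi_div_two, hcard]
  rw [← mul_div_mul_left _ _ (one_div_ne_zero pi_ne_zero)]
  congr 1
  field_simp
end
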